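/- Let h be an exponential random variable with rate 1 and let d be the distance of a uniformly random point in a disc of radius ρ from the center. Then the CDF of u = h/(1+d^α) is F_u(x) = 1 − (δ/ρ²)·exp(−x)·γ(δ, x·ρ^α)/x^δ, where δ = 2/α and γ is the lower incomplete gamma function. -/

import Mathlib

open Real MeasureTheory

/-- Lower incomplete gamma function `γ(a,x) = ∫₀ˣ t^{a-1} e^{-t} dt`. -/
noncomputable def lowerGamma (a x : ℝ) : ℝ := ∫ t in (0:ℝ)..x, t ^ (a - 1) * Real.exp (-t)

/-- The law of an `Exp(1)` random variable. -/
noncomputable def expMeasure : Measure ℝ :=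
  (volume.restrict (Set.Ioi (0:ℝ))).withDensity fun t => ENNReal.ofReal (Real.exp (-t))

/-- Uniform distribution on the disc of radius `ρ` centered at the origin of the plane. -/
noncomputable def unifDisc (ρ : ℝ) : Measure (EuclideanSpace ℝ (Fin 2)) :=
  (ENNReal.ofReal (Real.pi * ρ ^ 2))⁻¹ • volume.restrict (Metric.ball 0 ρ)

/-!
Conditionally on the point `p` of the disc, `P(h < x (1 + ‖p‖^α)) = 1 - exp (-x (1 + ‖p‖^α))`,
so the CDF is `1 - e^{-x} E[exp (-x d^α)]`. Polar coordinates turn this expectation into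
`(2/ρ²) ∫₀^ρ y exp (-x y^α) dy`, and the substitution `t = x y^α` turns the latter into
`γ(δ, x ρ^α) / (α x^δ)`.
-/

open Set

instance : SFinite expMeasure := by
  unfold expMeasure; infer_instance

lemma expMeasure_Iio {c : ℝ} (hc : 0 ≤ c) :
    expMeasure (Iio c) = ENNReal.ofReal (1 - exp (-c)) := by
  rw [expMeasure, withDensity_apply _ measurableSet_Iio,
    Measure.restrict_restrict measurableSet_Iio, Iio_inter_Ioi,
    ← ofReal_integral_eq_lintegral_ofReal]
  · rw [← integral_Ioc_eq_integral_Ioo, ← intervalIntegral.integral_of_le hc,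
      intervalIntegral.integral_comp_neg exp, integral_exp]
    simp
  · exact (exp_neg_integrableOn_Ioi 0 one_pos).mono_set Ioo_subset_Ioi_self |>.congr
      (by filter_upwards with t; simp)
  · filter_upwards with t using (exp_pos _).le

lemma expMeasure_prod_div_lt_toReal {X : Type*} [MeasurableSpace X] (μ : Measure X)
    [IsProbabilityMeasure μ] {w : X → ℝ} (hw : Measurable w) (hw_pos : ∀ p, 0 < w p)
    {x : ℝ} (hx : 0 ≤ x) :
    ((expMeasure.prod μ) {q | q.1 / w q.2 < x}).toReal = 1 - ∫ p, exp (-(x * w p)) ∂μ := by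
  have hmeas : MeasurableSet {q : ℝ × X | q.1 / w q.2 < x} :=
    measurableSet_lt (measurable_fst.div (hw.comp measurable_snd)) measurable_const
  have hsec : ∀ p, (fun h : ℝ => (h, p)) ⁻¹' {q : ℝ × X | q.1 / w q.2 < x} = Iio (x * w p) :=
    fun p => by ext h; simp [div_lt_iff₀ (hw_pos p)]
  have hexp_le : ∀ p, exp (-(x * w p)) ≤ 1 := fun p =>
    exp_le_one_iff.2 (neg_nonpos.2 (mul_nonneg hx (hw_pos p).le))
  have hint : Integrable (fun p => exp (-(x * w p))) μ :=
    .of_bound (by fun_prop) 1 (.of_forall fun p => by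
      rw [norm_of_nonneg (exp_pos _).le]; exact hexp_le p)
  simp_rw [Measure.prod_apply_symm hmeas, hsec,
    expMeasure_Iio (mul_nonneg hx (hw_pos _).le)]
  rw [← ofReal_integral_eq_lintegral_ofReal (f := fun p => 1 - exp (-(x * w p)))
      ((integrable_const 1).sub hint)
      (.of_forall fun p => sub_nonneg.2 (hexp_le p)),
    ENNReal.toReal_ofReal (integral_nonneg fun p => sub_nonneg.2 (hexp_le p)),
    integral_sub (integrable_const 1) hint, integral_const, probReal_univ, one_smul]

section Polar

variable {E F : Type*} [NormedAddCommGroup E] [NormedSpace ℝ E] [FiniteDimensional ℝ E]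
  [MeasurableSpace E] [BorelSpace E] [Nontrivial E]
  [NormedAddCommGroup F] [NormedSpace ℝ F]
  (μ : Measure E) [μ.IsAddHaarMeasure]

lemma setIntegral_ball_fun_norm {ρ : ℝ} (hρ : 0 ≤ ρ) (f : ℝ → F) :
    ∫ p in Metric.ball 0 ρ, f ‖p‖ ∂μ = Module.finrank ℝ E • μ.real (Metric.ball 0 1) •
      ∫ y in 0..ρ, y ^ (Module.finrank ℝ E - 1) • f y := by
  have hball : (Metric.ball (0 : E) ρ).indicator (fun p => f ‖p‖) =
      fun p => (Iio ρ).indicator f ‖p‖ := by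
    ext p; simp [indicator]
  have hsmul : (fun y : ℝ => y ^ (Module.finrank ℝ E - 1) • (Iio ρ).indicator f y) =
      (Iio ρ).indicator fun y => y ^ (Module.finrank ℝ E - 1) • f y := by
    ext y; by_cases hy : y < ρ <;> simp [indicator, hy]
  rw [← integral_indicator measurableSet_ball, hball, integral_fun_norm_addHaar, hsmul,
    integral_indicator measurableSet_Iio, Measure.restrict_restrict measurableSet_Iio,
    Iio_inter_Ioi, intervalIntegral.integral_of_le hρ, integral_Ioc_eq_integral_Ioo]

end Polar

lemma isProbabilityMeasure_unifDisc {ρ : ℝ} (hρ : 0 < ρ) : IsProbabilityMeasure (unifDisc ρ) := by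
  constructor
  rw [unifDisc, Measure.smul_apply, Measure.restrict_apply_univ,
    EuclideanSpace.volume_ball_fin_two, ← ENNReal.ofReal_pow hρ.le,
    ← ENNReal.ofReal_mul (by positivity), mul_comm, smul_eq_mul]
  exact ENNReal.inv_mul_cancel (by simp; positivity) ENNReal.ofReal_ne_top

lemma integral_unifDisc_fun_norm {ρ : ℝ} (hρ : 0 < ρ) (f : ℝ → ℝ) :
    ∫ p, f ‖p‖ ∂unifDisc ρ = 2 / ρ ^ 2 * ∫ y in 0..ρ, y * f y := by
  have hvol : volume.real (Metric.ball (0 : EuclideanSpace ℝ (Fin 2)) 1) = π := by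
    simp [measureReal_def, pi_nonneg]
  rw [unifDisc, integral_smul_measure, setIntegral_ball_fun_norm volume hρ.le, hvol,
    finrank_euclideanSpace_fin, ENNReal.toReal_inv, ENNReal.toReal_ofReal (by positivity)]
  simp only [smul_eq_mul, Nat.add_one_sub_one, pow_one, nsmul_eq_mul]
  field_simp
  ring

lemma integral_rpow_mul_exp_neg_mul_rpow_eq_lowerGamma (s : ℝ) {α x ρ : ℝ} (hα : 0 < α)
    (hx : 0 < x) (hρ : 0 ≤ ρ) :
    ∫ y in 0..ρ, y ^ (s - 1) * exp (-(x * y ^ α)) =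
      lowerGamma (s / α) (x * ρ ^ α) / (α * x ^ (s / α)) := by
  set φ : ℝ → ℝ := fun y => x * y ^ α
  have hmono : StrictMonoOn φ (Icc 0 ρ) := fun a ha b hb hab =>
    mul_lt_mul_of_pos_left (rpow_lt_rpow ha.1 hab hα) hx
  have himage : φ '' Ioo 0 ρ = Ioo 0 (x * ρ ^ α) := by
    rw [ContinuousOn.image_Ioo_of_strictMonoOn hρ (by fun_prop (disch := positivity)) hmono]
    simp [φ, zero_rpow hα.ne']
  have hderiv : ∀ y ∈ Ioo 0 ρ, HasDerivWithinAt φ (x * (α * y ^ (α - 1))) (Ioo 0 ρ) y :=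
    fun y hy => ((hasDerivAt_rpow_const (Or.inl hy.1.ne')).const_mul x).hasDerivWithinAt
  rw [eq_div_iff (by positivity), lowerGamma, intervalIntegral.integral_of_le hρ,
    intervalIntegral.integral_of_le (by positivity : 0 ≤ x * ρ ^ α),
    integral_Ioc_eq_integral_Ioo, integral_Ioc_eq_integral_Ioo, ← himage,
    integral_image_eq_integral_abs_deriv_smul measurableSet_Ioo hderiv
      (hmono.injOn.mono Ioo_subset_Icc_self), ← integral_mul_const]
  refine setIntegral_congr_fun measurableSet_Ioo fun y hy => ?_
  have hy := hy.1
  rw [abs_of_pos (by positivity), smul_eq_mul, mul_rpow hx.le (by positivity),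
    ← rpow_mul hy.le]
  have hy_pow : y ^ (α - 1) * y ^ (α * (s / α - 1)) = y ^ (s - 1) := by
    rw [← rpow_add hy]; congr 1; field_simp; ring
  have hx_pow : x * x ^ (s / α - 1) = x ^ (s / α) := by
    rw [mul_comm, ← rpow_add_one hx.ne', sub_add_cancel]
  rw [← hy_pow, ← hx_pow]
  dsimp only [φ]
  ring

/-- CDF of `u = h/(1+d^α)` where `h ~ Exp(1)` and `d` is the distance from the
center of a uniformly random point in a disc of radius `ρ`:
`F_u(x) = 1 − (δ/ρ²) e^{−x} γ(δ, x ρ^α)/x^δ` with `δ = 2/α`. -/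
theorem stmt_1 (ρ α x : ℝ) (hρ : 0 < ρ) (hα : 2 < α) (hx : 0 < x) :
    ((expMeasure.prod (unifDisc ρ))
        {q : ℝ × EuclideanSpace ℝ (Fin 2) | q.1 / (1 + ‖q.2‖ ^ α) < x}).toReal =
      1 - ((2 / α) / ρ ^ 2) * Real.exp (-x) * lowerGamma (2 / α) (x * ρ ^ α) / x ^ (2 / α) := by
  have hα0 : 0 < α := by linarith
  have := isProbabilityMeasure_unifDisc hρ
  have hshift : ∫ p, exp (-(x * (1 + ‖p‖ ^ α))) ∂unifDisc ρ =
      exp (-x) * ∫ p, exp (-(x * ‖p‖ ^ α)) ∂unifDisc ρ := by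
    rw [← integral_const_mul]
    simp_rw [← exp_add, mul_add, mul_one, neg_add]
  have hγ := integral_rpow_mul_exp_neg_mul_rpow_eq_lowerGamma 2 hα0 hx hρ.le
  norm_num only [rpow_one] at hγ
  rw [expMeasure_prod_div_lt_toReal (unifDisc ρ) (w := fun p => 1 + ‖p‖ ^ α) (by fun_prop)
      (fun p => by positivity) hx.le,
    hshift, integral_unifDisc_fun_norm hρ (fun y => exp (-(x * y ^ α))), hγ]
  field_simp
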